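/- The Σ-algebra homomorphism Σ[ρ] → Σ[X]/(Φ_m(X)) determined by sending the chosen generator t of ρ to the class of X is surjective, and its restriction to the ideal e_prim·Σ[ρ] is bijective. Consequently the primitive part e_prim·Σ[ρ], viewed as a ring with unit e_prim, is isomorphic as a Σ-algebra to Σ[X]/(Φ_m(X)); in particular it is a free Σ-module of rank φ(m), where φ is Euler's totient function. -/

import Mathlib

/-!
Evaluation at `t` maps `Σ[X]` onto `Σ[ρ]` and kills `X ^ m - 1 = Φ_m · ∏_{d ∣ m, d < m} Φ_d`.
Modulo `Φ_m`, the element `e_{ρ_p}` becomes `p⁻¹ (1 + X^{m/p} + ⋯ + X^{(p-1)m/p})`, the quotient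
of `X ^ m - 1` by `X^{m/p} - 1`, which `Φ_m` divides; so the induced map `π : Σ[ρ] → Σ[X]/(Φ_m)`
sends `e_prim` to `1`. Conversely each `Φ_d` with `d ∣ m`, `d < m` divides `X^{m/p} - 1` for a
prime `p ∣ m / d`; being pairwise coprime over `ℚ`, these `Φ_d` together divide
`∏_p (X^{m/p} - 1)`. As `t^{m/p} - 1` divides `1 - e_{ρ_p}`, this gives `e_prim · Φ_m(t) = 0`:
`e_prim` annihilates the kernel of `π`. An idempotent that maps to `1` under a surjection and
annihilates its kernel makes it bijective on the ideal it generates.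
-/

open MonoidAlgebra Polynomial

/-- The averaging element `e_{ρ'} = (1/|ρ'|)·∑_{h ∈ ρ'} h` of the group algebra `Σ[ρ]`
associated to a subgroup `ρ'` of the finite group `ρ`. -/
noncomputable def avgIdem (S : Type*) [CommRing S] {ρ : Type*} [CommGroup ρ] [Fintype ρ]
    (ρ' : Subgroup ρ) : MonoidAlgebra S ρ :=
  haveI : Fintype ρ' := Fintype.ofFinite ρ'
  Ring.inverse ((Nat.card ρ' : S)) • ∑ h : ρ', MonoidAlgebra.of S ρ (h : ρ)

/-- The primitive idempotent `e_prim = ∏_{p ∣ m prime} (1 − e_{ρ_p})` of the group algebra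
`Σ[ρ]` of a cyclic group `ρ` of order `m` with chosen generator `t`; here `ρ_p` is the
unique subgroup of prime order `p`, namely the one generated by `t^(m/p)`. -/
noncomputable def primIdem (S : Type*) [CommRing S] {ρ : Type*} [CommGroup ρ] [Fintype ρ]
    (m : ℕ) (t : ρ) : MonoidAlgebra S ρ :=
  ∏ p ∈ m.primeFactors, (1 - avgIdem S (Subgroup.zpowers (t ^ (m / p))))

theorem MonoidAlgebra.surjective_aeval_of_forall_mem_zpowers (S : Type*) [CommSemiring S]
    {ρ : Type*} [Group ρ] [Finite ρ] {t : ρ} (ht : ∀ g : ρ, g ∈ Subgroup.zpowers t) :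
    Function.Surjective (aeval (of S ρ t) : S[X] →ₐ[S] MonoidAlgebra S ρ) := by
  intro a
  induction a using MonoidAlgebra.induction_on with
  | of g =>
    obtain ⟨n, rfl⟩ := mem_powers_iff_mem_zpowers.mpr (ht g)
    exact ⟨X ^ n, by simp⟩
  | add a b ha hb =>
    obtain ⟨P, rfl⟩ := ha
    obtain ⟨Q, rfl⟩ := hb
    exact ⟨P + Q, map_add _ _ _⟩
  | smul c a ha =>
    obtain ⟨P, rfl⟩ := ha
    exact ⟨c • P, map_smul _ _ _⟩

theorem MonoidAlgebra.exists_algHom_of_pow_orderOf_eq_one (S : Type*) [CommSemiring S] {ρ : Type*}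
    [Group ρ] [Finite ρ] {B : Type*} [Semiring B] [Algebra S B] {t : ρ}
    (ht : ∀ g : ρ, g ∈ Subgroup.zpowers t) {x : B} (hx : x ^ orderOf t = 1) :
    ∃ π : MonoidAlgebra S ρ →ₐ[S] B, π (of S ρ t) = x := by
  set u := Units.ofPowEqOne x _ hx (orderOf_pos t).ne'
  have hu : orderOf u ∣ orderOf t := orderOf_dvd_of_pow_eq_one (Units.pow_ofPowEqOne _ _)
  refine ⟨lift S B ρ ((Units.coeHom B).comp (monoidHomOfForallMemZpowers ht hu)), ?_⟩
  rw [lift_of, MonoidHom.comp_apply, monoidHomOfForallMemZpowers_apply_gen]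
  rfl

namespace Polynomial

theorem cyclotomic_dvd_geom_sum_X_pow (R : Type*) [CommRing R] {k p : ℕ} (hk : 0 < k)
    (hp : 1 < p) : cyclotomic (k * p) R ∣ ∑ i ∈ Finset.range p, (X ^ k) ^ i := by
  have hkp : k * p ≠ 0 := by positivity
  have hint : ∑ i ∈ Finset.range p, (X ^ k : ℤ[X]) ^ i =
      ∏ d ∈ (k * p).divisors \ k.divisors, cyclotomic d ℤ := by
    refine mul_left_cancel₀ (X_pow_sub_C_ne_zero hk (1 : ℤ)) ?_
    rw [C_1, X_pow_sub_one_mul_prod_cyclotomic_eq_X_pow_sub_one_of_dvd ℤ (dvd_mul_right k p) hkp,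
      mul_comm, geom_sum_mul, pow_mul]
  have hmem : k * p ∈ (k * p).divisors \ k.divisors := by
    simp only [Finset.mem_sdiff, Nat.mem_divisors, dvd_refl, ne_eq, hkp, not_false_eq_true,
      and_true, true_and]
    exact fun h => (Nat.le_of_dvd hk h.1).not_gt (lt_mul_right hk hp)
  have hZ : cyclotomic (k * p) ℤ ∣ ∑ i ∈ Finset.range p, (X ^ k : ℤ[X]) ^ i :=
    hint ▸ Finset.dvd_prod_of_mem _ hmem
  simpa [Polynomial.map_sum] using Polynomial.map_dvd (Int.castRingHom R) hZ

theorem prod_cyclotomic_properDivisors_dvd_prod_X_pow_div_sub_one {m : ℕ} (hm : 0 < m) :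
    ∏ d ∈ m.properDivisors, cyclotomic d ℤ ∣ ∏ p ∈ m.primeFactors, (X ^ (m / p) - 1) := by
  have hmonic : (∏ d ∈ m.properDivisors, cyclotomic d ℤ).Monic :=
    monic_prod_of_monic _ _ fun d _ => cyclotomic.monic d ℤ
  rw [← map_dvd_map (Int.castRingHom ℚ) Int.cast_injective hmonic]
  simp only [Polynomial.map_prod, map_cyclotomic_int, Polynomial.map_sub, Polynomial.map_pow,
    map_X, Polynomial.map_one]
  refine Finset.prod_dvd_of_coprime (fun a _ b _ hab => cyclotomic.isCoprime_rat hab)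
    fun d hd => ?_
  obtain ⟨hdm, hdlt⟩ := Nat.mem_properDivisors.1 hd
  obtain ⟨p, hp, hpd⟩ := Nat.exists_prime_and_dvd (n := m / d) fun h => by
    have := Nat.div_mul_cancel hdm
    rw [h, one_mul] at this
    omega
  obtain ⟨k, hk⟩ : d ∣ m / p :=
    Nat.dvd_div_of_mul_dvd (mul_comm d p ▸ Nat.mul_dvd_of_dvd_div hdm hpd)
  have hp : p ∈ m.primeFactors :=
    Nat.mem_primeFactors.2 ⟨hp, hpd.trans (Nat.div_dvd_of_dvd hdm), hm.ne'⟩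
  refine (cyclotomic.dvd_X_pow_sub_one d ℚ).trans (dvd_trans ?_ (Finset.dvd_prod_of_mem _ hp))
  rw [hk]
  exact pow_one_sub_dvd_pow_mul_sub_one _ _ _

theorem X_pow_sub_one_dvd_cyclotomic_mul_prod (R : Type*) [CommRing R] {m : ℕ} (hm : 0 < m) :
    X ^ m - 1 ∣ cyclotomic m R * ∏ p ∈ m.primeFactors, (X ^ (m / p) - 1) := by
  have hZ : (X ^ m - 1 : ℤ[X]) ∣ cyclotomic m ℤ * ∏ p ∈ m.primeFactors, (X ^ (m / p) - 1) := by
    rw [← prod_cyclotomic_eq_X_pow_sub_one hm, ← Nat.cons_self_properDivisors hm.ne',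
      Finset.prod_cons]
    exact mul_dvd_mul_left _ (prod_cyclotomic_properDivisors_dvd_prod_X_pow_div_sub_one hm)
  simpa [Polynomial.map_prod] using Polynomial.map_dvd (Int.castRingHom R) hZ

end Polynomial

section avgIdem

variable {S : Type*} [CommRing S] {ρ : Type*} [CommGroup ρ] [Fintype ρ]

theorem avgIdem_zpowers (s : ρ) :
    avgIdem S (Subgroup.zpowers s) =
      Ring.inverse (orderOf s : S) • ∑ i ∈ Finset.range (orderOf s), of S ρ s ^ i := by
  rw [avgIdem, Nat.card_zpowers, ← Fin.sum_univ_eq_sum_range]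
  congr 1
  convert ((finEquivZPowers (isOfFinOrder_of_finite s)).sum_comp fun h => of S ρ (h : ρ)).symm
  simp [finEquivZPowers_apply]

theorem of_mul_avgIdem {H : Subgroup ρ} {h : ρ} (hh : h ∈ H) :
    of S ρ h * avgIdem S H = avgIdem S H := by
  rw [avgIdem, mul_smul_comm, Finset.mul_sum]
  congr 1
  convert Equiv.sum_comp (Equiv.mulLeft (⟨h, hh⟩ : H)) fun k => of S ρ (k : ρ)
  simp

theorem isIdempotentElem_avgIdem {H : Subgroup ρ} (hH : IsUnit (Nat.card H : S)) :
    IsIdempotentElem (avgIdem S H) := by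
  let : Fintype H := Fintype.ofFinite H
  have hsum : (∑ h : H, of S ρ (h : ρ)) * avgIdem S H = (Nat.card H : S) • avgIdem S H := by
    simp only [Finset.sum_mul, fun h : H => of_mul_avgIdem (S := S) h.2, Finset.sum_const,
      Finset.card_univ, Fintype.card_eq_nat_card, Nat.cast_smul_eq_nsmul]
  unfold IsIdempotentElem
  nth_rw 1 [avgIdem]
  rw [smul_mul_assoc, hsum, smul_smul, Ring.inverse_mul_cancel _ hH, one_smul]

theorem sub_one_dvd_one_sub_avgIdem_zpowers {s : ρ} (hs : IsUnit (orderOf s : S)) :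
    of S ρ s - 1 ∣ 1 - avgIdem S (Subgroup.zpowers s) := by
  have hone : (1 : MonoidAlgebra S ρ) =
      Ring.inverse (orderOf s : S) • ∑ _i ∈ Finset.range (orderOf s), 1 := by
    rw [Finset.sum_const, Finset.card_range, ← Nat.cast_smul_eq_nsmul S, smul_smul,
      Ring.inverse_mul_cancel _ hs, one_smul]
  conv_rhs => rw [avgIdem_zpowers, hone, ← smul_sub, ← Finset.sum_sub_distrib, Algebra.smul_def]
  refine Dvd.dvd.mul_left ?_ _
  exact Finset.dvd_sum fun i _ => dvd_sub_comm.1 (sub_one_dvd_pow_sub_one _ i)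

end avgIdem

theorem Ideal.bijOn_span_singleton_of_isIdempotentElem {A B F : Type*} [CommRing A] [Ring B]
    [FunLike F A B] [RingHomClass F A B] {f : F} (hf : Function.Surjective f) {e : A}
    (he : IsIdempotentElem e) (hfe : f e = 1) (hker : ∀ a, f a = 0 → e * a = 0) :
    Set.BijOn f (Ideal.span {e}) Set.univ := by
  refine ⟨Set.mapsTo_univ _ _, ?_, ?_⟩
  · intro a ha b hb hab
    obtain ⟨a', rfl⟩ := Ideal.mem_span_singleton'.1 ha
    obtain ⟨b', rfl⟩ := Ideal.mem_span_singleton'.1 hb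
    have hdiff : e * (a' * e - b' * e) = 0 := hker _ (by rw [map_sub, hab, sub_self])
    linear_combination hdiff - (a' - b') * he.eq
  · intro y _
    obtain ⟨a, rfl⟩ := hf y
    exact ⟨e * a, Ideal.mul_mem_right _ _ (Ideal.mem_span_singleton_self e),
      by rw [map_mul, hfe, one_mul]⟩

section primIdem

variable {S : Type*} [CommRing S] {ρ : Type*} [CommGroup ρ] [Fintype ρ] {m : ℕ} {t : ρ}

theorem isIdempotentElem_primIdem (hu : IsUnit (Nat.card ρ : S)) :
    IsIdempotentElem (primIdem S m t) :=
  Finset.prod_induction _ IsIdempotentElem (fun _ _ => IsIdempotentElem.mul)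
    IsIdempotentElem.one fun _ _ => (isIdempotentElem_avgIdem
      (isUnit_of_dvd_unit (Nat.cast_dvd_cast (Subgroup.card_subgroup_dvd_card _)) hu)).one_sub

theorem primIdem_mul_aeval_cyclotomic_eq_zero (hcard : Nat.card ρ = m) (hu : IsUnit (m : S)) :
    primIdem S m t * aeval (of S ρ t) (cyclotomic m S) = 0 := by
  have hm : 0 < m := hcard ▸ Nat.card_pos
  have hdvd : ∏ p ∈ m.primeFactors, (of S ρ t ^ (m / p) - 1) ∣ primIdem S m t :=
    Finset.prod_dvd_prod_of_dvd _ _ fun p _ => by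
      rw [← map_pow]
      exact sub_one_dvd_one_sub_avgIdem_zpowers
        (isUnit_of_dvd_unit (Nat.cast_dvd_cast (hcard ▸ orderOf_dvd_natCard _)) hu)
  have htm : of S ρ t ^ m = 1 := by rw [← map_pow, ← hcard, pow_card_eq_one', map_one]
  have hzero : aeval (of S ρ t) (cyclotomic m S) *
      ∏ p ∈ m.primeFactors, (of S ρ t ^ (m / p) - 1) = 0 := by
    obtain ⟨Q, hQ⟩ := X_pow_sub_one_dvd_cyclotomic_mul_prod S hm
    simpa only [map_mul, map_sub, map_pow, map_one, map_prod, aeval_X, htm, sub_self,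
      zero_mul] using congrArg (aeval (of S ρ t)) hQ
  obtain ⟨c, hc⟩ := hdvd
  rw [hc, mul_right_comm, mul_comm _ (aeval _ _), hzero, zero_mul]

variable {B : Type*} [CommRing B] [Algebra S B]

theorem map_avgIdem_zpowers_pow_div_eq_zero (π : MonoidAlgebra S ρ →ₐ[S] B)
    (hord : orderOf t = m) {p : ℕ} (hp : p ∈ m.primeFactors)
    (hroot : aeval (π (of S ρ t)) (cyclotomic m S) = 0) :
    π (avgIdem S (Subgroup.zpowers (t ^ (m / p)))) = 0 := by
  subst hord
  obtain ⟨hpp, hpm, hm⟩ := Nat.mem_primeFactors.1 hp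
  obtain ⟨Q, hQ⟩ := cyclotomic_dvd_geom_sum_X_pow S (Nat.div_pos (Nat.le_of_dvd
    (Nat.pos_of_ne_zero hm) hpm) hpp.pos) hpp.one_lt
  have hsum := congrArg (aeval (π (of S ρ t))) hQ
  rw [Nat.div_mul_cancel hpm, map_mul, hroot, zero_mul] at hsum
  rw [avgIdem_zpowers, orderOf_pow_orderOf_div hm hpm, map_smul, map_sum]
  simp only [map_sum, map_pow, aeval_X] at hsum
  simp only [map_pow, hsum, smul_zero]

theorem map_primIdem_eq_one (π : MonoidAlgebra S ρ →ₐ[S] B) (hord : orderOf t = m)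
    (hroot : aeval (π (of S ρ t)) (cyclotomic m S) = 0) :
    π (primIdem S m t) = 1 := by
  rw [primIdem, map_prod]
  refine Finset.prod_eq_one fun p hp => ?_
  rw [map_sub, map_one, map_avgIdem_zpowers_pow_div_eq_zero π hord hp hroot, sub_zero]

end primIdem

theorem primitivePart_iso_cyclotomic_quotient_general
    (S : Type*) [CommRing S] [Nontrivial S] (ρ : Type*) [CommGroup ρ] [Fintype ρ]
    (m : ℕ) (hcard : Fintype.card ρ = m) (hu : IsUnit (m : S))
    (t : ρ) (ht : ∀ g : ρ, g ∈ Subgroup.zpowers t) :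
    ∃ π : MonoidAlgebra S ρ →ₐ[S] S[X] ⧸ Ideal.span {cyclotomic m S},
      π (MonoidAlgebra.of S ρ t) = Ideal.Quotient.mk (Ideal.span {cyclotomic m S}) X ∧
      Function.Surjective π ∧
      Set.BijOn π (Ideal.span {primIdem S m t} : Set (MonoidAlgebra S ρ)) Set.univ ∧
      Module.Free S (Submodule.restrictScalars S (Ideal.span {primIdem S m t})) ∧
      Module.finrank S (Submodule.restrictScalars S (Ideal.span {primIdem S m t})) =
        m.totient := by
  rw [← Nat.card_eq_fintype_card] at hcard
  have hord : orderOf t = m := (orderOf_eq_card_of_forall_mem_zpowers ht).trans hcard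
  have hroot : AdjoinRoot.root (cyclotomic m S) ^ orderOf t = 1 := by
    simpa [hord, sub_eq_zero] using AdjoinRoot.mk_eq_zero.2 (cyclotomic.dvd_X_pow_sub_one m S)
  obtain ⟨π, hπt⟩ := exists_algHom_of_pow_orderOf_eq_one S ht hroot
  have hπ_aeval (P : S[X]) : π (aeval (of S ρ t) P) = AdjoinRoot.mk _ P := by
    rw [← aeval_algHom_apply π, hπt, AdjoinRoot.aeval_eq]
  have hsurj : Function.Surjective π := fun y =>
    let ⟨P, hP⟩ := AdjoinRoot.mk_surjective y
    ⟨_, (hπ_aeval P).trans hP⟩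
  have hker (a : MonoidAlgebra S ρ) (ha : π a = 0) : primIdem S m t * a = 0 := by
    obtain ⟨P, rfl⟩ := surjective_aeval_of_forall_mem_zpowers S ht a
    obtain ⟨Q, rfl⟩ := AdjoinRoot.mk_eq_zero.1 ((hπ_aeval P).symm.trans ha)
    rw [map_mul, ← mul_assoc, primIdem_mul_aeval_cyclotomic_eq_zero hcard hu, zero_mul]
  have hbij := Ideal.bijOn_span_singleton_of_isIdempotentElem hsurj
    (isIdempotentElem_primIdem (hcard ▸ hu)) (map_primIdem_eq_one π hord (by
      rw [hπt, AdjoinRoot.aeval_eq, AdjoinRoot.mk_self])) hker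
  let E := LinearEquiv.ofBijective (π.toLinearMap ∘ₗ
      (Submodule.restrictScalars S (Ideal.span {primIdem S m t})).subtype)
    ⟨Set.injOn_iff_injective.1 hbij.injOn, Set.surjOn_iff_surjective.1 hbij.surjOn⟩
  have := (cyclotomic.monic m S).free_adjoinRoot
  exact ⟨π, hπt, hsurj, hbij, .of_equiv E.symm,
    E.finrank_eq.trans ((finrank_quotient_span_eq_natDegree' (cyclotomic.monic m S)).trans
      (natDegree_cyclotomic m S))⟩

/-- The `Σ`-algebra homomorphism `Σ[ρ] → Σ[X]/(Φ_m(X))` sending the chosen generator `t`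
to the class of `X` is surjective, and restricts to a bijection from the ideal
`e_prim·Σ[ρ]` onto `Σ[X]/(Φ_m(X))`; consequently the primitive part `e_prim·Σ[ρ]` is
isomorphic as a `Σ`-algebra to `Σ[X]/(Φ_m(X))`, and in particular it is a free
`Σ`-module of rank `φ(m)`. -/
theorem primitivePart_iso_cyclotomic_quotient
    (S : Type*) [CommRing S] [Nontrivial S] (ρ : Type*) [CommGroup ρ] [Fintype ρ]
    (m : ℕ) (hm : 0 < m) (hcard : Fintype.card ρ = m) (hu : IsUnit (m : S))
    (t : ρ) (ht : ∀ g : ρ, g ∈ Subgroup.zpowers t) :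
    ∃ π : MonoidAlgebra S ρ →ₐ[S] S[X] ⧸ Ideal.span {cyclotomic m S},
      π (MonoidAlgebra.of S ρ t) = Ideal.Quotient.mk (Ideal.span {cyclotomic m S}) X ∧
      Function.Surjective π ∧
      Set.BijOn π (Ideal.span {primIdem S m t} : Set (MonoidAlgebra S ρ)) Set.univ ∧
      Module.Free S (Submodule.restrictScalars S (Ideal.span {primIdem S m t})) ∧
      Module.finrank S (Submodule.restrictScalars S (Ideal.span {primIdem S m t})) =
        m.totient :=
  primitivePart_iso_cyclotomic_quotient_general S ρ m hcard hu t ht
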